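/- arXiv:1911.02267 — 5 statements merged into one kernel-verified Lean document; each statement's English description precedes it below -/
import Mathlib

section
/- Let R be a discrete valuation ring with fraction field K, and let f : A → B be a homomorphism of commutative R-algebras such that A and B are flat as R-modules, B is finite as an A-module (via f), and the induced map A ⊗_R K → B ⊗_R K on generic fibers is bijective. If there exists an A-linear map u : B → A with u(1) = 1, then f : A → B is bijective. -/
/-!
Since `u 1 = 1`, `u` is a retraction of `f`, so `f` is bijective as soon as `u` is injective.
After base change to `K`, `u ⊗ K` is a retraction of the bijection `f ⊗ K`, hence its inverse and
injective; as `B` is flat, hence torsion-free, `B → B ⊗[R] K` is injective, and injectivity of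
`u ⊗ K` descends to `u`.
-/

open scoped TensorProduct
open Function

theorem LinearMap.leftInverse_algebraMap_of_map_one {A B : Type*} [CommSemiring A] [Semiring B]
    [Algebra A B] (u : B →ₗ[A] A) (hu : u 1 = 1) : LeftInverse u (algebraMap A B) := fun a => by
  rw [Algebra.algebraMap_eq_smul_one, map_smul, hu, smul_eq_mul, mul_one]

theorem Module.Flat.injective_of_rTensor_injective {R K M N : Type*} [CommSemiring R]
    [CommSemiring K] [Algebra R K] [AddCommMonoid M] [Module R M] [AddCommMonoid N] [Module R N]
    [Module.Flat R M] (hK : Function.Injective (algebraMap R K)) {g : M →ₗ[R] N}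
    (hg : Function.Injective (g.rTensor K)) : Function.Injective g := by
  have hM : Function.Injective fun m : M => m ⊗ₜ[R] (1 : K) := by
    simpa [comp_def] using (Module.Flat.lTensor_preserves_injective_linearMap
      (M := M) (Algebra.linearMap R K) hK).comp (TensorProduct.rid R M).symm.injective
  have hcomm : (fun n : N => n ⊗ₜ[R] (1 : K)) ∘ g =
      g.rTensor K ∘ fun m : M => m ⊗ₜ[R] (1 : K) := by
    ext; simp
  refine Function.Injective.of_comp (f := fun n : N => n ⊗ₜ[R] (1 : K)) ?_
  rw [hcomm]
  exact hg.comp hM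

theorem statement1_general (R K A B : Type*) [CommRing R]
    [Field K] [Algebra R K] [IsFractionRing R K]
    [CommRing A] [CommRing B] [Algebra R A] [Algebra R B]
    [Module.Flat R B]
    (f : A →ₐ[R] B) [Algebra A B]
    (halg : (algebraMap A B : A →+* B) = f.toRingHom)
    (hK : Function.Bijective
      (Algebra.TensorProduct.map f (AlgHom.id R K) : A ⊗[R] K →ₐ[R] B ⊗[R] K))
    (u : B →ₗ[A] A) (hu : u 1 = 1) :
    Function.Bijective f := by
  have : IsScalarTower R A B :=
    .of_algebraMap_eq fun r => by rw [halg]; exact (f.commutes r).symm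
  have hretraction : LeftInverse u f := by
    simpa [halg] using u.leftInverse_algebraMap_of_map_one hu
  have hretractionK : LeftInverse ((u.restrictScalars R).rTensor K)
      (Algebra.TensorProduct.map f (AlgHom.id R K)) := by
    intro x
    induction x using TensorProduct.induction_on with
    | zero => simp
    | tmul a k => simp [hretraction a]
    | add x y hx hy => simp_all
  have hu_inj : Injective u :=
    Module.Flat.injective_of_rTensor_injective (IsFractionRing.injective R K)
      (hretractionK.rightInverse_of_surjective hK.2).injective
  exact ⟨hretraction.injective, (hretraction.rightInverse_of_injective hu_inj).surjective⟩

/-- Let `R` be a discrete valuation ring with fraction field `K`, and let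
`f : A → B` be a homomorphism of commutative `R`-algebras with `A`, `B` flat over `R`,
`B` finite as an `A`-module (via `f`), and such that `A ⊗[R] K → B ⊗[R] K` is bijective.
If there is an `A`-linear map `u : B → A` with `u 1 = 1`, then `f` is bijective. -/
theorem statement1 (R K A B : Type*) [CommRing R] [IsDomain R] [IsDiscreteValuationRing R]
    [Field K] [Algebra R K] [IsFractionRing R K]
    [CommRing A] [CommRing B] [Algebra R A] [Algebra R B]
    [Module.Flat R A] [Module.Flat R B]
    (f : A →ₐ[R] B) [Algebra A B]
    (halg : (algebraMap A B : A →+* B) = f.toRingHom)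
    [Module.Finite A B]
    (hK : Function.Bijective
      (Algebra.TensorProduct.map f (AlgHom.id R K) : A ⊗[R] K →ₐ[R] B ⊗[R] K))
    (u : B →ₗ[A] A) (hu : u 1 = 1) :
    Function.Bijective f :=
  statement1_general R K A B f halg hK u hu
end

section
/- Let p be a prime, R a complete discrete valuation ring of characteristic p, λ an element of the maximal ideal of R, and f ∈ R. Then the R-algebra homomorphism R[W₁, W₂]/(W₁^p − f, W₂^p − f) → R[x, W]/(x^p, W^p − f) determined by W₁ ↦ x + W + λ·x·W and W₂ ↦ W (which is well defined since (x + W + λxW)^p = x^p + W^p + λ^p x^p W^p = f in the target) is bijective. -/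
/-! The inverse sends `x ↦ (W₁ - W₂)(1 + λW₂)⁻¹` and `W ↦ W₂`. It is well defined because
`(W₁ - W₂)^p = W₁^p - W₂^p = 0` by Frobenius, and `1 + λW₂` is a unit because its `p`-th power
is `1 + λ^p f`, a unit of the local ring `R`. -/

open MvPolynomial

-- `S` may be the zero ring, so `CharP S p` need not hold and `add_pow_char` does not apply.
theorem add_pow_char_of_algebra (R : Type*) {S : Type*} [CommRing R] [CommRing S] [Algebra R S]
    (p : ℕ) [Fact p.Prime] [CharP R p] (a b : S) : (a + b) ^ p = a ^ p + b ^ p := by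
  have hp : (p : S) = 0 := by
    rw [← map_natCast (algebraMap R S), CharP.cast_eq_zero, map_zero]
  simp [add_pow_prime_eq (Fact.out : p.Prime), hp]

theorem sub_pow_char_of_algebra (R : Type*) {S : Type*} [CommRing R] [CommRing S] [Algebra R S]
    (p : ℕ) [Fact p.Prime] [CharP R p] (a b : S) : (a - b) ^ p = a ^ p - b ^ p := by
  rw [eq_sub_iff_add_eq, ← add_pow_char_of_algebra R, sub_add_cancel]

theorem isUnit_one_add_mul_of_pow_eq_algebraMap {R S : Type*} [CommRing R] [IsLocalRing R]
    [CommRing S] [Algebra R S] {p : ℕ} [Fact p.Prime] [CharP R p] {lam : R}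
    (hlam : lam ∈ IsLocalRing.maximalIdeal R) {f : R} {w : S}
    (hw : w ^ p = algebraMap R S f) : IsUnit (1 + algebraMap R S lam * w) := by
  have hmem : -(lam ^ p * f) ∈ IsLocalRing.maximalIdeal R :=
    neg_mem (Ideal.mul_mem_right _ _ (Ideal.pow_mem_of_mem _ hlam p (Fact.out : p.Prime).pos))
  have hunit : IsUnit (1 + lam ^ p * f) := by
    simpa using IsLocalRing.isUnit_one_sub_self_of_mem_nonunits _ hmem
  have hpow : (1 + algebraMap R S lam * w) ^ p = algebraMap R S (1 + lam ^ p * f) := by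
    rw [add_pow_char_of_algebra R, one_pow, mul_pow, hw]
    simp
  exact (isUnit_pow_iff (Fact.out : p.Prime).ne_zero).1 (hpow ▸ hunit.map _)

section QuotientSpan

variable {R σ S : Type*} [CommRing R] [CommRing S] [Algebra R S] {s : Set (MvPolynomial σ R)}

noncomputable def MvPolynomial.liftQuotientSpan (g : σ → S) (hg : ∀ r ∈ s, aeval g r = 0) :
    MvPolynomial σ R ⧸ Ideal.span s →ₐ[R] S :=
  Ideal.Quotient.liftₐ _ (aeval g) fun _ ha =>
    Ideal.span_le (I := RingHom.ker (aeval g)) |>.2 hg ha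

@[simp]
theorem MvPolynomial.liftQuotientSpan_mk_X (g : σ → S) (hg : ∀ r ∈ s, aeval g r = 0) (i : σ) :
    liftQuotientSpan g hg (Ideal.Quotient.mk _ (X i)) = g i :=
  aeval_X g i

theorem MvPolynomial.quotient_algHom_ext {I : Ideal (MvPolynomial σ R)}
    {f g : MvPolynomial σ R ⧸ I →ₐ[R] S}
    (h : ∀ i, f (Ideal.Quotient.mk _ (X i)) = g (Ideal.Quotient.mk _ (X i))) : f = g :=
  Ideal.Quotient.algHom_ext R (algHom_ext h)

theorem MvPolynomial.mk_X_pow_eq_algebraMap {i : σ} {n : ℕ} {a : R}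
    (h : X i ^ n - C a ∈ s) :
    Ideal.Quotient.mk (Ideal.span s) (X i) ^ n = algebraMap R _ a := by
  rw [← map_pow]
  exact Ideal.Quotient.eq.2 (Ideal.subset_span h)

end QuotientSpan

theorem statement4_general (p : ℕ) [Fact p.Prime] (R : Type*) [CommRing R] [IsDomain R]
    [IsDiscreteValuationRing R] [CharP R p]
    (lam : R) (hlam : lam ∈ IsLocalRing.maximalIdeal R) (f : R)
    (φ : (MvPolynomial (Fin 2) R ⧸
            Ideal.span {(X 0 : MvPolynomial (Fin 2) R) ^ p - C f, (X 1) ^ p - C f}) →ₐ[R]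
         (MvPolynomial (Fin 2) R ⧸
            Ideal.span {(X 0 : MvPolynomial (Fin 2) R) ^ p, (X 1) ^ p - C f}))
    (hφ1 : φ (Ideal.Quotient.mk _ (X 0)) =
      Ideal.Quotient.mk _ (X 0 + X 1 + C lam * X 0 * X 1))
    (hφ2 : φ (Ideal.Quotient.mk _ (X 1)) = Ideal.Quotient.mk _ (X 1)) :
    Function.Bijective φ := by
  have hW₁ : Ideal.Quotient.mk (Ideal.span {(X 0 : MvPolynomial (Fin 2) R) ^ p - C f,
      X 1 ^ p - C f}) (X 0) ^ p = algebraMap R _ f := mk_X_pow_eq_algebraMap (by simp)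
  have hW₂ : Ideal.Quotient.mk (Ideal.span {(X 0 : MvPolynomial (Fin 2) R) ^ p - C f,
      X 1 ^ p - C f}) (X 1) ^ p = algebraMap R _ f := mk_X_pow_eq_algebraMap (by simp)
  obtain ⟨c, hc⟩ := (isUnit_one_add_mul_of_pow_eq_algebraMap hlam hW₂).exists_right_inv
  let ψ := liftQuotientSpan (s := {X 0 ^ p, X 1 ^ p - C f})
    ![(Ideal.Quotient.mk _ (X 0) - Ideal.Quotient.mk _ (X 1)) * c, Ideal.Quotient.mk _ (X 1)]
    (by simp [mul_pow, sub_pow_char_of_algebra R, hW₁, hW₂])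
  have hφx : φ (Ideal.Quotient.mk _ (X 0)) = Ideal.Quotient.mk _ (X 0) +
      Ideal.Quotient.mk _ (X 1) + algebraMap R _ lam * Ideal.Quotient.mk _ (X 0) *
        Ideal.Quotient.mk _ (X 1) := hφ1
  have hφc : (1 + algebraMap R _ lam * Ideal.Quotient.mk _ (X 1)) * φ c = 1 := by
    simpa [hφ2] using congrArg φ hc
  refine (AlgEquiv.ofAlgHom φ ψ ?_ ?_).bijective
  · refine quotient_algHom_ext (Fin.forall_fin_two.2 ⟨?_, ?_⟩)
    · simp only [ψ, AlgHom.comp_apply, liftQuotientSpan_mk_X, Matrix.cons_val_zero, map_mul,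
        map_sub, hφx, hφ2, AlgHom.id_apply]
      linear_combination Ideal.Quotient.mk _ (X 0) * hφc
    · simp [ψ, hφ2]
  · refine quotient_algHom_ext (Fin.forall_fin_two.2 ⟨?_, ?_⟩)
    · simp only [ψ, AlgHom.comp_apply, hφx, map_add, map_mul, AlgHom.commutes,
        liftQuotientSpan_mk_X, Matrix.cons_val_zero, Matrix.cons_val_one, AlgHom.id_apply]
      linear_combination (Ideal.Quotient.mk _ (X 0) - Ideal.Quotient.mk _ (X 1)) * hc
    · simp [ψ, hφ2]

/-- Let `p` be a prime, `R` a complete discrete valuation ring of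
characteristic `p`, `lam` an element of the maximal ideal of `R` and `f ∈ R`.  Then the
`R`-algebra homomorphism
`R[W₁,W₂]/(W₁^p - f, W₂^p - f) → R[x,W]/(x^p, W^p - f)` determined by
`W₁ ↦ x + W + lam·x·W` and `W₂ ↦ W` is bijective.  (Here `W₁, W₂` are the two variables
`X 0, X 1` of the source and `x, W` the two variables `X 0, X 1` of the target.) -/
theorem statement4 (p : ℕ) [Fact p.Prime] (R : Type*) [CommRing R] [IsDomain R]
    [IsDiscreteValuationRing R] [CharP R p]
    [IsAdicComplete (IsLocalRing.maximalIdeal R) R]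
    (lam : R) (hlam : lam ∈ IsLocalRing.maximalIdeal R) (f : R)
    (φ : (MvPolynomial (Fin 2) R ⧸
            Ideal.span {(X 0 : MvPolynomial (Fin 2) R) ^ p - C f, (X 1) ^ p - C f}) →ₐ[R]
         (MvPolynomial (Fin 2) R ⧸
            Ideal.span {(X 0 : MvPolynomial (Fin 2) R) ^ p, (X 1) ^ p - C f}))
    (hφ1 : φ (Ideal.Quotient.mk _ (X 0)) =
      Ideal.Quotient.mk _ (X 0 + X 1 + C lam * X 0 * X 1))
    (hφ2 : φ (Ideal.Quotient.mk _ (X 1)) = Ideal.Quotient.mk _ (X 1)) :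
    Function.Bijective φ :=
  statement4_general p R lam hlam f φ hφ1 hφ2
end

section
/- Let p be a prime and R a complete discrete valuation ring with fraction field K of characteristic p, perfect residue field of characteristic p, and uniformizer π. Let u ∈ R^×, let i be an integer with 1 ≤ i ≤ p − 1, and let m, n be natural numbers with m·i = n·p + 1. Let L be a field extension of K of degree p containing an element α with α^p = u·π^i, and set τ := π^{−n}·α^m ∈ L. Then τ^p = u^m·π, the R-subalgebra R[τ] generated by τ in L is a discrete valuation ring, and R[τ] equals the integral closure of R in L; moreover R[τ] is R-isomorphic to R[T]/(T^p − u^m·π). -/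
/-!
With `ϖ := u ^ m * π`, a uniformizer, `τ ^ p = ϖ`, so `X ^ p - ϖ` is Eisenstein: it is the minimal
polynomial of `τ` over `R` and over `K`, whence `L = K(τ)`, `R[τ] ≅ R[X] ⧸ (X ^ p - ϖ)`, and
Eisenstein's integrality criterion makes `R[τ]` the integral closure of `R` in `L`.
In characteristic `p`, `x ↦ x ^ p` is then a ring map `R[τ] → R`; it reflects units and sends `τ`
to `ϖ`, so `τ` is irreducible, and a nonzero `x` with `x ^ p = v * ϖ ^ k` is `τ ^ k` times the unit
`x / τ ^ k` (which lies in `R[τ]` because its `p`-th power lies in `R`). Hence `R[τ]` is a DVR.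
-/

open Polynomial

theorem inv_pow_mul_pow_pow_eq {F : Type*} [Field F] {a b α : F} (ha : a ≠ 0) {p i m n : ℕ}
    (hα : α ^ p = b * a ^ i) (hmn : m * i = n * p + 1) :
    (a⁻¹ ^ n * α ^ m) ^ p = b ^ m * a := by
  have hαm : (α ^ m) ^ p = b ^ m * a ^ (n * p) * a := by
    rw [← pow_mul, mul_comm, pow_mul, hα, mul_pow, ← pow_mul, mul_comm i, hmn, pow_succ, mul_assoc]
  rw [mul_pow, hαm, inv_pow, inv_pow, ← pow_mul]
  field_simp

theorem Polynomial.isEisensteinAt_X_pow_sub_C {R : Type*} [CommRing R] [Nontrivial R]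
    {𝓟 : Ideal R} (h𝓟 : 𝓟 ≠ ⊤) {c : R} (hc : c ∈ 𝓟) (hc2 : c ∉ 𝓟 ^ 2) {n : ℕ} (hn : 0 < n) :
    (X ^ n - C c).IsEisensteinAt 𝓟 := by
  refine (monic_X_pow_sub_C c hn.ne').isEisensteinAt_of_mem_of_notMem h𝓟 (fun {k} hk => ?_) ?_
  · rw [natDegree_X_pow_sub_C] at hk
    rw [coeff_sub, coeff_X_pow, if_neg hk.ne, coeff_C, zero_sub, neg_mem_iff]
    split_ifs
    exacts [hc, 𝓟.zero_mem]
  · rwa [coeff_sub, coeff_X_pow, if_neg hn.ne, coeff_C_zero, zero_sub, neg_mem_iff]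

section Prime

variable {R : Type*} [CommRing R] [IsDomain R] {ϖ : R} {n : ℕ}

theorem Prime.isEisensteinAt_X_pow_sub_C (hϖ : Prime ϖ) (hn : 0 < n) :
    (X ^ n - C ϖ).IsEisensteinAt (Ideal.span {ϖ}) := by
  refine Polynomial.isEisensteinAt_X_pow_sub_C ?_ (Ideal.mem_span_singleton_self ϖ) ?_ hn
  · rw [Ne, Ideal.span_singleton_eq_top]
    exact hϖ.not_isUnit
  · rw [Ideal.span_singleton_pow, Ideal.mem_span_singleton]
    nth_rw 2 [← pow_one ϖ]
    rw [pow_dvd_pow_iff hϖ.ne_zero hϖ.not_isUnit]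
    omega

theorem Prime.irreducible_X_pow_sub_C (hϖ : Prime ϖ) (hn : 0 < n) :
    Irreducible (X ^ n - C ϖ) :=
  (hϖ.isEisensteinAt_X_pow_sub_C hn).irreducible ((Ideal.span_singleton_prime hϖ.ne_zero).mpr hϖ)
    (monic_X_pow_sub_C ϖ hn.ne').isPrimitive (by rwa [natDegree_X_pow_sub_C])

theorem minpoly_eq_X_pow_sub_C [IsIntegrallyClosed R] {S : Type*} [CommRing S] [IsDomain S]
    [Algebra R S] [Module.IsTorsionFree R S] (hϖ : Prime ϖ) (hn : 0 < n) {τ : S}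
    (hτ : τ ^ n = algebraMap R S ϖ) : minpoly R τ = X ^ n - C ϖ := by
  have hmonic : (X ^ n - C ϖ).Monic := monic_X_pow_sub_C ϖ hn.ne'
  have hroot : aeval τ (X ^ n - C ϖ) = 0 := by
    rw [map_sub, map_pow, aeval_X, aeval_C, hτ, sub_self]
  have hint : IsIntegral R τ := ⟨_, hmonic, hroot⟩
  refine eq_of_monic_of_associated (minpoly.monic hint) hmonic ?_
  exact (minpoly.irreducible hint).associated_of_dvd (hϖ.irreducible_X_pow_sub_C hn)
    (minpoly.isIntegrallyClosed_dvd hint hroot)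

end Prime

theorem exists_smul_mem_adjoin_of_mem_adjoin_fractionRing {R K L : Type*} [CommRing R]
    [Field K] [Algebra R K] [IsFractionRing R K] [CommRing L] [Algebra K L] [Algebra R L]
    [IsScalarTower R K L] {x z : L} (hz : z ∈ Algebra.adjoin K {x}) :
    ∃ b ∈ nonZeroDivisors R, b • z ∈ Algebra.adjoin R {x} := by
  rw [Algebra.adjoin_singleton_eq_range_aeval] at hz
  obtain ⟨f, rfl⟩ := hz
  obtain ⟨b, hb, hf⟩ := IsLocalization.integerNormalization_spec (nonZeroDivisors R) f
  refine ⟨b, hb, ?_⟩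
  rw [Algebra.adjoin_singleton_eq_range_aeval]
  refine ⟨IsLocalization.integerNormalization (nonZeroDivisors R) f, ?_⟩
  change aeval x _ = b • aeval x f
  rw [← aeval_map_algebraMap K, hf,
    ← IsScalarTower.algebraMap_smul K b f, map_smul, IsScalarTower.algebraMap_smul]

section Frobenius

variable {R L : Type*} [CommRing R] [CommRing L] [Algebra R L] (p : ℕ) [ExpChar L p]

theorem pow_mem_bot_of_mem_adjoin {s : Set L} (hs : ∀ y ∈ s, y ^ p ∈ (⊥ : Subalgebra R L)) {x : L}
    (hx : x ∈ Algebra.adjoin R s) : x ^ p ∈ (⊥ : Subalgebra R L) := by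
  induction hx using Algebra.adjoin_induction with
  | mem y hy => exact hs y hy
  | algebraMap r => exact ⟨r ^ p, map_pow _ _ _⟩
  | add a b _ _ ha hb => rw [add_pow_expChar]; exact add_mem ha hb
  | mul a b _ _ ha hb => rw [mul_pow]; exact mul_mem ha hb

variable {p} (A : Subalgebra R L) (hinj : Function.Injective (algebraMap R L))
  (hA : ∀ x ∈ A, x ^ p ∈ (⊥ : Subalgebra R L))

noncomputable def Subalgebra.frobeniusToBase : A →+* R :=
  (Algebra.botEquivOfInjective hinj : (⊥ : Subalgebra R L) →+* R).comp
    (((frobenius L p).comp A.val.toRingHom).codRestrict (⊥ : Subalgebra R L) fun x => hA x x.2)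

theorem Subalgebra.algebraMap_frobeniusToBase (x : A) :
    algebraMap R L (A.frobeniusToBase hinj hA x) = (x : L) ^ p :=
  congrArg Subtype.val ((Algebra.botEquivOfInjective hinj).symm_apply_apply ⟨_, hA x x.2⟩)

instance Subalgebra.isLocalHom_frobeniusToBase : IsLocalHom (A.frobeniusToBase hinj hA) := by
  refine ⟨fun x hx => (isUnit_pow_iff (expChar_pos L p).ne').mp ?_⟩
  have : algebraMap R A (A.frobeniusToBase hinj hA x) = x ^ p :=
    Subtype.ext (A.algebraMap_frobeniusToBase hinj hA x)
  exact this ▸ hx.map _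

end Frobenius

section FractionField

variable {R K L : Type*} [CommRing R] [IsDomain R]
  [Field K] [Algebra R K] [IsFractionRing R K]
  [Field L] [Algebra K L] [Algebra R L] [IsScalarTower R K L]
  {p : ℕ} {ϖ : R} {τ : L}

theorem adjoin_eq_top_of_finrank_eq [IsIntegrallyClosed R] (hϖ : Prime ϖ) (hp : 0 < p)
    (hτ : τ ^ p = algebraMap R L ϖ) (hL : Module.finrank K L = p) :
    Algebra.adjoin K {τ} = ⊤ := by
  have : Module.IsTorsionFree R L := .trans_faithfulSMul R K L
  have : FiniteDimensional K L := Module.finite_of_finrank_pos (hL ▸ hp)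
  have hint : IsIntegral R τ := IsIntegral.of_pow hp (hτ ▸ isIntegral_algebraMap)
  have hdeg : (minpoly K τ).natDegree = p := by
    rw [minpoly.isIntegrallyClosed_eq_field_fractions' K hint,
      minpoly_eq_X_pow_sub_C hϖ hp hτ, Polynomial.map_sub, Polynomial.map_pow, map_X, map_C,
      natDegree_X_pow_sub_C]
  refine Algebra.toSubmodule_eq_top.mp (Submodule.eq_top_of_finrank_eq ?_)
  rw [Subalgebra.finrank_toSubmodule, (Algebra.adjoin.powerBasis hint.tower_top).finrank,
    Algebra.adjoin.powerBasis_dim, hdeg, hL]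

variable [IsDiscreteValuationRing R]

theorem adjoin_eq_integralClosure (hϖ : Irreducible ϖ) (hp : 0 < p)
    (hτ : τ ^ p = algebraMap R L ϖ) (hL : Module.finrank K L = p) :
    Algebra.adjoin R {τ} = integralClosure R L := by
  have hint : IsIntegral R τ := IsIntegral.of_pow hp (hτ ▸ isIntegral_algebraMap)
  refine le_antisymm (Algebra.adjoin_le (Set.singleton_subset_iff.mpr hint)) fun z hz => ?_
  have hadj := adjoin_eq_top_of_finrank_eq hϖ.prime hp hτ hL
  obtain ⟨b, hb, hbz⟩ := exists_smul_mem_adjoin_of_mem_adjoin_fractionRing (R := R)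
    (hadj ▸ Algebra.mem_top : z ∈ Algebra.adjoin K {τ})
  obtain ⟨e, v, rfl⟩ := IsDiscreteValuationRing.eq_unit_mul_pow_irreducible
    (nonZeroDivisors.ne_zero hb) hϖ
  have hez : ϖ ^ e • z ∈ Algebra.adjoin R {τ} := by
    have := Subalgebra.smul_mem _ hbz ((v⁻¹ : Rˣ) : R)
    rwa [smul_smul, ← mul_assoc, Units.inv_mul, one_mul] at this
  have : Module.IsTorsionFree R L := .trans_faithfulSMul R K L
  exact mem_adjoin_of_smul_prime_pow_smul_of_minpoly_isEisensteinAt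
    (B := PowerBasis.ofAdjoinEqTop hint.tower_top hadj) hϖ.prime hint hz hez
    (by rw [PowerBasis.ofAdjoinEqTop_gen, minpoly_eq_X_pow_sub_C hϖ.prime hp hτ]
        exact hϖ.prime.isEisensteinAt_X_pow_sub_C hp)

variable [ExpChar L p]

theorem mem_adjoin_iff_pow_mem_bot (hϖ : Irreducible ϖ) (hτ : τ ^ p = algebraMap R L ϖ)
    (hL : Module.finrank K L = p) {x : L} :
    x ∈ Algebra.adjoin R {τ} ↔ x ^ p ∈ (⊥ : Subalgebra R L) := by
  have hp := expChar_pos L p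
  refine ⟨pow_mem_bot_of_mem_adjoin p (by simp [hτ]), fun ⟨r, hr⟩ => ?_⟩
  rw [adjoin_eq_integralClosure hϖ hp hτ hL]
  exact IsIntegral.of_pow hp (hr ▸ isIntegral_algebraMap)

theorem isDiscreteValuationRing_adjoin (hϖ : Irreducible ϖ) (hτ : τ ^ p = algebraMap R L ϖ)
    (hL : Module.finrank K L = p) : IsDiscreteValuationRing (Algebra.adjoin R {τ}) := by
  have hp := expChar_pos L p
  have : Module.IsTorsionFree R L := .trans_faithfulSMul R K L
  have hinj := Module.isTorsionFree_iff_algebraMap_injective.mp this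
  set A := Algebra.adjoin R {τ}
  let φ := A.frobeniusToBase hinj fun x hx => (mem_adjoin_iff_pow_mem_bot hϖ hτ hL).mp hx
  have hφ (a : A) : algebraMap R L (φ a) = (a : L) ^ p := A.algebraMap_frobeniusToBase hinj _ a
  let t : A := ⟨τ, Algebra.self_mem_adjoin_singleton R τ⟩
  have hφt : φ t = ϖ := hinj (by rw [hφ]; exact hτ)
  refine .ofHasUnitMulPowIrreducibleFactorization ⟨t, .of_map (f := φ) (hφt ▸ hϖ), fun {a} ha => ?_⟩
  have hφa : φ a ≠ 0 := fun h => ha <| Subtype.ext <| (pow_eq_zero_iff hp.ne').mp <| by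
    rw [← hφ, h, map_zero]
  obtain ⟨k, v, hv⟩ := IsDiscreteValuationRing.eq_unit_mul_pow_irreducible hφa hϖ
  have hϖL : algebraMap R L ϖ ≠ 0 := (map_ne_zero_iff _ hinj).mpr hϖ.ne_zero
  have hτk : τ ^ k ≠ 0 := pow_ne_zero k fun h => hϖL (by rw [← hτ, h, zero_pow hp.ne'])
  have hy : ((a : L) / τ ^ k) ^ p = algebraMap R L v := by
    rw [div_pow, ← hφ, hv, ← pow_mul, mul_comm k, pow_mul, hτ, map_mul, map_pow,
      mul_div_cancel_right₀ _ (pow_ne_zero k hϖL)]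
  have hyA : (a : L) / τ ^ k ∈ A := (mem_adjoin_iff_pow_mem_bot hϖ hτ hL).mpr ⟨v, hy.symm⟩
  have hyunit : IsUnit (⟨_, hyA⟩ : A) :=
    isUnit_of_map_unit φ _ (by rw [show φ ⟨_, hyA⟩ = v from hinj (by rw [hφ, hy])]; exact v.isUnit)
  exact ⟨k, hyunit.unit, Subtype.ext (mul_div_cancel₀ (a : L) hτk)⟩

end FractionField

theorem statement5_general (p : ℕ) [Fact p.Prime]
    (R : Type*) [CommRing R] [IsDomain R] [IsDiscreteValuationRing R]
    (K : Type*) [Field K] [Algebra R K] [IsFractionRing R K] [CharP K p]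
    (π : R) (hπ : Irreducible π)
    (u : Rˣ) (i : ℕ)
    (m n : ℕ) (hmn : m * i = n * p + 1)
    (L : Type*) [Field L] [Algebra K L] [Algebra R L] [IsScalarTower R K L]
    (hL : Module.finrank K L = p)
    (α : L) (hα : α ^ p = algebraMap R L ((u : R) * π ^ i))
    (τ : L) (hτ : τ = (algebraMap R L π)⁻¹ ^ n * α ^ m) :
    τ ^ p = algebraMap R L ((u : R) ^ m * π) ∧
    (∃ _ : IsDomain (Algebra.adjoin R {τ} : Subalgebra R L),
      IsDiscreteValuationRing (Algebra.adjoin R {τ} : Subalgebra R L)) ∧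
    Algebra.adjoin R {τ} = integralClosure R L ∧
    Nonempty ((Algebra.adjoin R {τ} : Subalgebra R L) ≃ₐ[R]
      (R[X] ⧸ Ideal.span {(X : R[X]) ^ p - C ((u : R) ^ m * π)})) := by
  have : CharP L p := charP_of_injective_algebraMap (algebraMap K L).injective p
  have : Module.IsTorsionFree R L := .trans_faithfulSMul R K L
  have hp : 0 < p := (Fact.out : p.Prime).pos
  have hinj := Module.isTorsionFree_iff_algebraMap_injective.mp this
  have hτp : τ ^ p = algebraMap R L ((u : R) ^ m * π) := by
    rw [map_mul, map_pow] at hα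
    rw [hτ, map_mul, map_pow]
    exact inv_pow_mul_pow_pow_eq ((map_ne_zero_iff _ hinj).mpr hπ.ne_zero) hα hmn
  have hϖ : Irreducible ((u : R) ^ m * π) := by
    rw [← Units.val_pow_eq_pow_val]
    exact (irreducible_units_mul _).mpr hπ
  refine ⟨hτp, ⟨inferInstance, isDiscreteValuationRing_adjoin hϖ hτp hL⟩,
    adjoin_eq_integralClosure hϖ hp hτp hL, ⟨?_⟩⟩
  rw [← minpoly_eq_X_pow_sub_C hϖ.prime hp hτp]
  exact (minpoly.equivAdjoin (IsIntegral.of_pow hp (hτp ▸ isIntegral_algebraMap))).symm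

/-- Let `R` be a complete discrete valuation ring with fraction field
`K` of characteristic `p`, perfect residue field of characteristic `p`, and uniformizer
`π`.  Let `u ∈ Rˣ`, `1 ≤ i ≤ p - 1`, and `m, n ∈ ℕ` with `m·i = n·p + 1`.  Let `L/K` be
a degree-`p` field extension containing `α` with `α^p = u·π^i`, and set
`τ := π^{-n}·α^m ∈ L`.  Then `τ^p = u^m·π`, `R[τ]` is a discrete valuation ring equal to
the integral closure of `R` in `L`, and `R[τ] ≅ R[T]/(T^p - u^m·π)` as `R`-algebras. -/
theorem statement5 (p : ℕ) [Fact p.Prime]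
    (R : Type*) [CommRing R] [IsDomain R] [IsDiscreteValuationRing R]
    [IsAdicComplete (IsLocalRing.maximalIdeal R) R]
    (K : Type*) [Field K] [Algebra R K] [IsFractionRing R K] [CharP K p]
    [CharP (IsLocalRing.ResidueField R) p] [ExpChar (IsLocalRing.ResidueField R) p]
    [PerfectRing (IsLocalRing.ResidueField R) p]
    (π : R) (hπ : Irreducible π)
    (u : Rˣ) (i : ℕ) (hi1 : 1 ≤ i) (hi2 : i ≤ p - 1)
    (m n : ℕ) (hmn : m * i = n * p + 1)
    (L : Type*) [Field L] [Algebra K L] [Algebra R L] [IsScalarTower R K L]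
    (hL : Module.finrank K L = p)
    (α : L) (hα : α ^ p = algebraMap R L ((u : R) * π ^ i))
    (τ : L) (hτ : τ = (algebraMap R L π)⁻¹ ^ n * α ^ m) :
    τ ^ p = algebraMap R L ((u : R) ^ m * π) ∧
    (∃ _ : IsDomain (Algebra.adjoin R {τ} : Subalgebra R L),
      IsDiscreteValuationRing (Algebra.adjoin R {τ} : Subalgebra R L)) ∧
    Algebra.adjoin R {τ} = integralClosure R L ∧
    Nonempty ((Algebra.adjoin R {τ} : Subalgebra R L) ≃ₐ[R]
      (R[X] ⧸ Ideal.span {(X : R[X]) ^ p - C ((u : R) ^ m * π)})) :=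
  statement5_general p R K π hπ u i m n hmn L hL α hα τ hτ
end

section
/- Let p be a prime and R a discrete valuation ring whose residue field k has characteristic p, and let u ∈ R^× be a unit whose image in k is not a p-th power. Then the quotient ring R[X]/(X^p − u) is a discrete valuation ring. -/
/-!
Write `A = R[X]/(X^p - u)`. Since `u` has no `p`-th root in the residue field `k`, the reduction
`X^p - ū` is irreducible over `k`, so the monic lift `X^p - u` is irreducible, hence prime, in
the factorial ring `R[X]`, and `A` is a domain, finite over `R`. Every maximal ideal of `A` lies
over `𝔪_R` by integrality, so contains `𝔪_R A`; and `A / 𝔪_R A ≅ k[X]/(X^p - ū)` is a field. Hence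
`A` is local with maximal ideal `𝔪_R A`, which is generated by a uniformizer of `R`, so the
noetherian local domain `A` is a discrete valuation ring.
-/

open Polynomial IsLocalRing

section

variable {R S : Type*} [CommRing R] [IsLocalRing R] [CommRing S] [Algebra R S]
  [Algebra.IsIntegral R S]

theorem Ideal.eq_map_maximalIdeal_of_isIntegral
    (hM : ((maximalIdeal R).map (algebraMap R S)).IsMaximal) {J : Ideal S} (hJ : J.IsMaximal) :
    J = (maximalIdeal R).map (algebraMap R S) := by
  have hcomap : J.comap (algebraMap R S) = maximalIdeal R :=
    eq_maximalIdeal (Ideal.isMaximal_comap_of_isIntegral_of_isMaximal J)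
  have hle : (maximalIdeal R).map (algebraMap R S) ≤ J := by
    rw [Ideal.map_le_iff_le_comap, hcomap]
  exact (hM.eq_of_le hJ.ne_top hle).symm

theorem IsLocalRing.of_isIntegral_of_isMaximal_map
    (hM : ((maximalIdeal R).map (algebraMap R S)).IsMaximal) : IsLocalRing S :=
  of_unique_max_ideal ⟨_, hM, fun _ hJ => Ideal.eq_map_maximalIdeal_of_isIntegral hM hJ⟩

end

namespace AdjoinRoot

variable {R : Type*} [CommRing R]

theorem isMaximal_map_maximalIdeal [IsLocalRing R] {f : R[X]}
    (hf : Irreducible (f.map (residue R))) :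
    ((maximalIdeal R).map (algebraMap R (AdjoinRoot f))).IsMaximal := by
  let := Ideal.Quotient.field (maximalIdeal R)
  have : (Ideal.span {f.map (Ideal.Quotient.mk (maximalIdeal R))}).IsMaximal :=
    PrincipalIdealRing.isMaximal_of_irreducible hf
  exact Ideal.Quotient.maximal_of_isField _ (MulEquiv.isField
    (Ideal.Quotient.field _).toIsField (quotAdjoinRootEquivQuotPolynomialQuot _ f).toMulEquiv)

theorem isDomain_of_irreducible_map [IsDomain R] [UniqueFactorizationMonoid R] {K : Type*}
    [CommRing K] [IsDomain K] (φ : R →+* K) {f : R[X]} (hmonic : f.Monic)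
    (hf : Irreducible (f.map φ)) : IsDomain (AdjoinRoot f) :=
  isDomain_of_prime (hmonic.irreducible_of_irreducible_map φ f hf).prime

theorem isDiscreteValuationRing_of_irreducible_map_residue [IsDomain R]
    [IsDiscreteValuationRing R] {f : R[X]} (hmonic : f.Monic)
    (hf : Irreducible (f.map (residue R))) [IsDomain (AdjoinRoot f)] :
    IsDiscreteValuationRing (AdjoinRoot f) := by
  have : Module.Finite R (AdjoinRoot f) := (powerBasis' hmonic).finite
  have : IsLocalRing (AdjoinRoot f) :=
    .of_isIntegral_of_isMaximal_map (isMaximal_map_maximalIdeal hf)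
  obtain ⟨π, hπ⟩ := IsDiscreteValuationRing.exists_irreducible R
  have hmax : maximalIdeal (AdjoinRoot f) = Ideal.span {algebraMap R _ π} := by
    rw [← eq_maximalIdeal (isMaximal_map_maximalIdeal hf),
      (IsDiscreteValuationRing.irreducible_iff_uniformizer π).mp hπ, Ideal.map_span,
      Set.image_singleton]
  have hdeg : f.degree ≠ 0 := by
    intro h
    rw [hmonic.degree_le_zero_iff_eq_one.mp h.le] at hf
    simp at hf
  have hπ0 : algebraMap R (AdjoinRoot f) π ≠ 0 :=
    (map_ne_zero_iff _ (of.injective_of_degree_ne_zero hdeg)).mpr hπ.ne_zero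
  have hnf : ¬ IsField (AdjoinRoot f) := by
    rw [isField_iff_maximalIdeal_eq, hmax, Ideal.span_singleton_eq_bot]
    exact hπ0
  exact ((IsDiscreteValuationRing.TFAE _ hnf).out 0 4).mpr (Submodule.IsPrincipal.mk ⟨_, hmax⟩)

end AdjoinRoot

theorem statement6_general (p : ℕ) [Fact p.Prime] (R : Type*) [CommRing R] [IsDomain R]
    [IsDiscreteValuationRing R]
    (u : Rˣ)
    (hu : ¬ ∃ a : IsLocalRing.ResidueField R, a ^ p = IsLocalRing.residue R (u : R)) :
    ∃ _ : IsDomain (R[X] ⧸ Ideal.span {(X : R[X]) ^ p - C (u : R)}),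
      IsDiscreteValuationRing (R[X] ⧸ Ideal.span {(X : R[X]) ^ p - C (u : R)}) := by
  have hp : p.Prime := Fact.out
  have hmonic : (X ^ p - C (u : R)).Monic := monic_X_pow_sub_C _ hp.ne_zero
  have hirr : Irreducible ((X ^ p - C (u : R)).map (residue R)) := by
    rw [Polynomial.map_sub, Polynomial.map_pow, map_X, map_C]
    exact X_pow_sub_C_irreducible_of_prime hp fun b hb => hu ⟨b, hb⟩
  have := AdjoinRoot.isDomain_of_irreducible_map _ hmonic hirr
  exact ⟨this, AdjoinRoot.isDiscreteValuationRing_of_irreducible_map_residue hmonic hirr⟩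

/-- Let `p` be a prime and `R` a discrete valuation ring whose residue
field has characteristic `p`, and let `u ∈ Rˣ` be a unit whose residue class is not a
`p`-th power.  Then `R[X]/(X^p - u)` is a discrete valuation ring. -/
theorem statement6 (p : ℕ) [Fact p.Prime] (R : Type*) [CommRing R] [IsDomain R]
    [IsDiscreteValuationRing R] [CharP (IsLocalRing.ResidueField R) p]
    (u : Rˣ)
    (hu : ¬ ∃ a : IsLocalRing.ResidueField R, a ^ p = IsLocalRing.residue R (u : R)) :
    ∃ _ : IsDomain (R[X] ⧸ Ideal.span {(X : R[X]) ^ p - C (u : R)}),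
      IsDiscreteValuationRing (R[X] ⧸ Ideal.span {(X : R[X]) ^ p - C (u : R)}) :=
  statement6_general p R u hu
end

section
/- Let p be a prime, R a discrete valuation ring of characteristic p with uniformizer π, λ an element of the maximal ideal of R, δ ∈ R^× a unit, i ≥ 1 an integer, and m, n natural numbers with m·i = n·p + 1. Set A := R[x]/(x^p) and B := R[T]/(T^p − δ^{−m}·π), and write τ for the image of T in B. Then the element w := 1 + δ^n·(x ⊗ τ^i) + λ·(x ⊗ 1) of A ⊗_R B satisfies w^p = 1 (in particular w is a unit), the element s := (1 ⊗ τ)·w^{−m} satisfies s^p = δ^{−m}·π, and consequently there is a unique R-algebra homomorphism B → A ⊗_R B sending τ to s. -/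
/-!
Since `p = 0` in the `R`-algebra `A ⊗_R B`, the `p`-th power map is additive there. Both
`x ⊗ τ^i` and `x ⊗ 1` have `p`-th power `x^p ⊗ _ = 0`, so `w^p = 1`; hence `w^{-m}` has trivial
`p`-th power and `s^p = 1 ⊗ τ^p = δ^{-m}π`. So `s` is a root of `T^p - δ^{-m}π`, and `τ ↦ s`
is the lift of `aeval s` through the quotient `B`.
-/

open Polynomial

open scoped TensorProduct

theorem add_pow_prime_of_natCast_eq_zero {S : Type*} [CommSemiring S] {p : ℕ} (hp : p.Prime)
    (hpS : (p : S) = 0) (a b : S) : (a + b) ^ p = a ^ p + b ^ p := by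
  rw [add_pow_prime_eq' hp, hpS, zero_mul, add_zero]

theorem one_add_add_pow_eq_one {S : Type*} [CommSemiring S] {p : ℕ} (hp : p.Prime)
    (hpS : (p : S) = 0) {a b : S} (ha : a ^ p = 0) (hb : b ^ p = 0) : (1 + a + b) ^ p = 1 := by
  rw [add_pow_prime_of_natCast_eq_zero hp hpS, add_pow_prime_of_natCast_eq_zero hp hpS, one_pow,
    ha, hb, add_zero, add_zero]

theorem mul_inverse_pow_pow_of_pow_eq_one {M : Type*} [CommMonoidWithZero M] {p : ℕ} (m : ℕ)
    {w : M} (hw : w ^ p = 1) (t : M) : (t * Ring.inverse w ^ m) ^ p = t ^ p := by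
  rw [mul_pow, ← pow_mul, Ring.inverse_pow, mul_comm m p, pow_mul, hw, one_pow,
    Ring.inverse_one, mul_one]

theorem natCast_eq_zero_of_charP_algebra (R : Type*) {S : Type*} [CommSemiring R] [Semiring S]
    [Algebra R S] (p : ℕ) [CharP R p] : (p : S) = 0 := by
  rw [← map_natCast (algebraMap R S), CharP.cast_eq_zero, map_zero]

section TensorProduct

variable {R A B : Type*} [CommSemiring R] [CommSemiring A] [CommSemiring B] [Algebra R A]
  [Algebra R B] {p : ℕ}

theorem mul_tmul_pow_eq_zero {x : A} (hx : x ^ p = 0) (u : A ⊗[R] B) (y : B) :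
    (u * x ⊗ₜ[R] y) ^ p = 0 := by
  rw [mul_pow, Algebra.TensorProduct.tmul_pow, hx, TensorProduct.zero_tmul, mul_zero]

theorem one_tmul_mul_inverse_pow_pow {c : R} {τ : B} (hτ : τ ^ p = algebraMap R B c) (m : ℕ)
    {w : A ⊗[R] B} (hw : w ^ p = 1) :
    ((1 : A) ⊗ₜ[R] τ * Ring.inverse w ^ m) ^ p = algebraMap R (A ⊗[R] B) c := by
  rw [mul_inverse_pow_pow_of_pow_eq_one m hw, Algebra.TensorProduct.tmul_pow, one_pow, hτ]
  exact Algebra.TensorProduct.includeRight.commutes c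

end TensorProduct

section QuotientSpanSingleton

variable {R S : Type*} [CommRing R] [Semiring S] [Algebra R S]

theorem aeval_quotient_mk_X_span_singleton (f : R[X]) :
    aeval (Ideal.Quotient.mk (Ideal.span {f}) X) f = 0 :=
  (AdjoinRoot.aeval_eq f).trans AdjoinRoot.mk_self

theorem aeval_X_pow_sub_C_eq_zero {p : ℕ} {c : R} {s : S} (hs : s ^ p = algebraMap R S c) :
    aeval s (X ^ p - C c) = 0 := by
  -- `S` is only a semiring: the subtraction is moved into `R`
  rw [sub_eq_add_neg, ← C_neg, map_add, map_pow, aeval_X, aeval_C, hs, ← map_add, add_neg_cancel,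
    map_zero]

theorem existsUnique_algHom_quotient_span_singleton {f : R[X]} {s : S} (hs : aeval s f = 0) :
    ∃! φ : (R[X] ⧸ Ideal.span {f}) →ₐ[R] S, φ (Ideal.Quotient.mk _ X) = s := by
  have hker : ∀ q ∈ Ideal.span {f}, aeval s q = 0 := by
    intro q hq
    obtain ⟨g, rfl⟩ := Ideal.mem_span_singleton'.mp hq
    rw [map_mul, hs, mul_zero]
  have hX : Ideal.Quotient.liftₐ (Ideal.span {f}) (aeval s) hker (Ideal.Quotient.mk _ X) = s :=
    aeval_X s
  refine ⟨_, hX, fun ψ hψ => Ideal.Quotient.algHom_ext R (Polynomial.algHom_ext ?_)⟩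
  simpa only [AlgHom.comp_apply, Ideal.Quotient.mkₐ_eq_mk, hX] using hψ

end QuotientSpanSingleton

theorem statement8_general (p : ℕ) [Fact p.Prime]
    (R : Type*) [CommRing R] [CharP R p]
    (π : R)
    (lam : R)
    (δ : Rˣ) (i : ℕ) (m n : ℕ)
    (IA IB : Ideal R[X])
    (hIA : IA = Ideal.span {(X : R[X]) ^ p})
    (hIB : IB = Ideal.span {(X : R[X]) ^ p - C ((↑(δ⁻¹ ^ m) : R) * π)})
    (x : R[X] ⧸ IA) (hx : x = Ideal.Quotient.mk IA X)
    (τ : R[X] ⧸ IB) (hτ : τ = Ideal.Quotient.mk IB X)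
    (w : (R[X] ⧸ IA) ⊗[R] (R[X] ⧸ IB))
    (hw : w = 1 + @algebraMap R ((R[X] ⧸ IA) ⊗[R] (R[X] ⧸ IB)) _ Algebra.TensorProduct.instSemiring _ (↑(δ ^ n) : R) *
        (x ⊗ₜ[R] (τ ^ i)) +
      @algebraMap R ((R[X] ⧸ IA) ⊗[R] (R[X] ⧸ IB)) _ Algebra.TensorProduct.instSemiring _ lam * (x ⊗ₜ[R] (1 : R[X] ⧸ IB))) :
    w ^ p = 1 ∧ IsUnit w ∧
    (((1 : R[X] ⧸ IA) ⊗ₜ[R] τ) * (Ring.inverse w) ^ m) ^ p =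
      @algebraMap R ((R[X] ⧸ IA) ⊗[R] (R[X] ⧸ IB)) _ Algebra.TensorProduct.instSemiring _ ((↑(δ⁻¹ ^ m) : R) * π) ∧
    ∃! φ : (R[X] ⧸ IB) →ₐ[R] (R[X] ⧸ IA) ⊗[R] (R[X] ⧸ IB),
      φ τ = ((1 : R[X] ⧸ IA) ⊗ₜ[R] τ) * (Ring.inverse w) ^ m := by
  have hp : p.Prime := Fact.out
  subst hIA hIB hx hτ
  have hxp : (Ideal.Quotient.mk (Ideal.span {(X : R[X]) ^ p}) X) ^ p = 0 := by
    simpa using aeval_quotient_mk_X_span_singleton ((X : R[X]) ^ p)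
  have hτp : (Ideal.Quotient.mk (Ideal.span {(X : R[X]) ^ p - C ((↑(δ⁻¹ ^ m) : R) * π)}) X) ^ p =
      algebraMap R _ ((↑(δ⁻¹ ^ m) : R) * π) := by
    simpa [sub_eq_zero] using aeval_quotient_mk_X_span_singleton
      ((X : R[X]) ^ p - C ((↑(δ⁻¹ ^ m) : R) * π))
  have hwp : w ^ p = 1 := hw ▸ one_add_add_pow_eq_one hp (natCast_eq_zero_of_charP_algebra R p)
    (mul_tmul_pow_eq_zero hxp _ _) (mul_tmul_pow_eq_zero hxp _ _)
  have hsp := one_tmul_mul_inverse_pow_pow (A := R[X] ⧸ Ideal.span {(X : R[X]) ^ p}) hτp m hwp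
  exact ⟨hwp, IsUnit.of_pow_eq_one hwp hp.ne_zero, hsp,
    existsUnique_algHom_quotient_span_singleton (aeval_X_pow_sub_C_eq_zero hsp)⟩

/-- Let `R` be a discrete valuation ring of characteristic `p` with
uniformizer `π`, `lam` in the maximal ideal, `δ ∈ Rˣ`, `i ≥ 1`, and `m, n ∈ ℕ` with
`m·i = n·p + 1`.  Set `A := R[x]/(x^p)`, `B := R[T]/(T^p - δ^{-m}·π)`, `τ` the image of
`T`.  Then `w := 1 + δ^n·(x ⊗ τ^i) + lam·(x ⊗ 1) ∈ A ⊗[R] B` satisfies `w^p = 1` (in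
particular `w` is a unit), `s := (1 ⊗ τ)·w^{-m}` satisfies `s^p = δ^{-m}·π`, and there
is a unique `R`-algebra homomorphism `B → A ⊗[R] B` sending `τ` to `s`. -/
theorem statement8 (p : ℕ) [Fact p.Prime]
    (R : Type*) [CommRing R] [IsDomain R] [IsDiscreteValuationRing R] [CharP R p]
    (π : R) (hπ : Irreducible π)
    (lam : R) (hlam : lam ∈ IsLocalRing.maximalIdeal R)
    (δ : Rˣ) (i : ℕ) (hi : 1 ≤ i) (m n : ℕ) (hmn : m * i = n * p + 1)
    (IA IB : Ideal R[X])
    (hIA : IA = Ideal.span {(X : R[X]) ^ p})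
    (hIB : IB = Ideal.span {(X : R[X]) ^ p - C ((↑(δ⁻¹ ^ m) : R) * π)})
    (x : R[X] ⧸ IA) (hx : x = Ideal.Quotient.mk IA X)
    (τ : R[X] ⧸ IB) (hτ : τ = Ideal.Quotient.mk IB X)
    (w : (R[X] ⧸ IA) ⊗[R] (R[X] ⧸ IB))
    (hw : w = 1 + @algebraMap R ((R[X] ⧸ IA) ⊗[R] (R[X] ⧸ IB)) _ Algebra.TensorProduct.instSemiring _ (↑(δ ^ n) : R) *
        (x ⊗ₜ[R] (τ ^ i)) +
      @algebraMap R ((R[X] ⧸ IA) ⊗[R] (R[X] ⧸ IB)) _ Algebra.TensorProduct.instSemiring _ lam * (x ⊗ₜ[R] (1 : R[X] ⧸ IB))) :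
    w ^ p = 1 ∧ IsUnit w ∧
    (((1 : R[X] ⧸ IA) ⊗ₜ[R] τ) * (Ring.inverse w) ^ m) ^ p =
      @algebraMap R ((R[X] ⧸ IA) ⊗[R] (R[X] ⧸ IB)) _ Algebra.TensorProduct.instSemiring _ ((↑(δ⁻¹ ^ m) : R) * π) ∧
    ∃! φ : (R[X] ⧸ IB) →ₐ[R] (R[X] ⧸ IA) ⊗[R] (R[X] ⧸ IB),
      φ τ = ((1 : R[X] ⧸ IA) ⊗ₜ[R] τ) * (Ring.inverse w) ^ m :=
  statement8_general p R π lam δ i m n IA IB hIA hIB x hx τ hτ w hw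
end
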